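/- arXiv:1810.13085 — 2 statements merged into one kernel-verified Lean document; each statement's English description precedes it below -/
import Mathlib

section
/- For every $t \in (0, 1]$, the integral $\psi_2(t) := t^{-1/2} \int_0^t (t-s)^{-1/2} \ln(e + 1/(t-s))\, ds$ is finite, and $\psi_2(t) \le C \ln(e + 1/t)$ for some absolute constant $C$. -/
open MeasureTheory Real

private lemma log_le_four_rpow {x : ℝ} (hx : 0 < x) :
    Real.log x ≤ 4 * x ^ ((1:ℝ)/4) := by
  have h1 : Real.log (x ^ ((1:ℝ)/4)) = (1/4) * Real.log x := Real.log_rpow hx _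
  have h2 : Real.log (x ^ ((1:ℝ)/4)) ≤ x ^ ((1:ℝ)/4) - 1 :=
    Real.log_le_sub_one_of_pos (Real.rpow_pos_of_pos hx _)
  nlinarith [Real.rpow_pos_of_pos hx ((1:ℝ)/4)]

theorem psi2_finite_and_log_bound :
    ∃ C : ℝ, 0 < C ∧ ∀ t : ℝ, 0 < t → t ≤ 1 →
      IntegrableOn
        (fun s => (t - s) ^ (-(1 : ℝ) / 2) * Real.log (Real.exp 1 + 1 / (t - s)))
        (Set.Ioo 0 t) volume ∧
      t ^ (-(1 : ℝ) / 2) *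
          ∫ s in Set.Ioo 0 t,
            (t - s) ^ (-(1 : ℝ) / 2) * Real.log (Real.exp 1 + 1 / (t - s))
        ≤ C * Real.log (Real.exp 1 + 1 / t) := by
  refine ⟨18, by norm_num, fun t ht0 ht1 => ?_⟩
  set e1 := Real.exp 1 with he1def
  have he1 : 0 < e1 := Real.exp_pos 1
  set L := Real.log (e1 + 1 / t) with hLdef
  have hLpos : (1:ℝ) ≤ L := by
    rw [hLdef]
    calc (1:ℝ) = Real.log e1 := (Real.log_exp 1).symm
      _ ≤ Real.log (e1 + 1/t) := Real.log_le_log he1 (le_add_of_nonneg_right (by positivity))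
  set g : ℝ → ℝ := fun u => u ^ (-(1:ℝ)/2) * Real.log (e1 + 1/u) with hgdef
  set h : ℝ → ℝ := fun u => u ^ (-(1:ℝ)/2) * L + 4 * t ^ ((1:ℝ)/4) * u ^ (-(3:ℝ)/4)
    with hhdef
  -- pointwise bounds on Ioo 0 t
  have hpt : ∀ u ∈ Set.Ioo (0:ℝ) t, 0 ≤ g u ∧ g u ≤ h u := by
    intro u hu
    obtain ⟨hu0, hut⟩ := hu
    have hru : (0:ℝ) ≤ u ^ (-(1:ℝ)/2) := (Real.rpow_pos_of_pos hu0 _).le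
    have hlog0 : (0:ℝ) ≤ Real.log (e1 + 1/u) := by
      have : (1:ℝ) ≤ e1 + 1/u := by
        have := Real.add_one_le_exp (1:ℝ)
        have h1u : 0 < 1/u := by positivity
        nlinarith
      exact Real.log_nonneg this
    refine ⟨mul_nonneg hru hlog0, ?_⟩
    -- key: log (e1 + 1/u) ≤ L + 4 * (t/u)^(1/4)
    have key1 : e1 + 1/u ≤ (e1 + 1/t) * (t/u) := by
      have htu : (0:ℝ) < t/u := by positivity
      have expand : (e1 + 1/t) * (t/u) = e1 * (t/u) + 1/u := by
        field_simp
      rw [expand]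
      have : e1 ≤ e1 * (t/u) := by
        nlinarith [(one_le_div hu0).mpr hut.le]
      linarith
    have key2 : Real.log (e1 + 1/u) ≤ L + 4 * (t/u) ^ ((1:ℝ)/4) := by
      have hlog1 : Real.log (e1 + 1/u) ≤ Real.log ((e1 + 1/t) * (t/u)) :=
        Real.log_le_log (by positivity) key1
      have hlog2 : Real.log ((e1 + 1/t) * (t/u)) = L + Real.log (t/u) := by
        rw [Real.log_mul (by positivity) (by positivity), hLdef]
      have hlog3 : Real.log (t/u) ≤ 4 * (t/u) ^ ((1:ℝ)/4) :=
        log_le_four_rpow (by positivity)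
      linarith
    have step : g u ≤ u ^ (-(1:ℝ)/2) * (L + 4 * (t/u) ^ ((1:ℝ)/4)) :=
      mul_le_mul_of_nonneg_left key2 hru
    have rearr : u ^ (-(1:ℝ)/2) * (L + 4 * (t/u) ^ ((1:ℝ)/4)) = h u := by
      have hdiv : (t/u) ^ ((1:ℝ)/4) = t ^ ((1:ℝ)/4) * u ^ (-(1:ℝ)/4) := by
        have hneg : u ^ (-(1:ℝ)/4) = (u ^ ((1:ℝ)/4))⁻¹ := by
          rw [show (-(1:ℝ)/4) = -((1:ℝ)/4) by norm_num, Real.rpow_neg hu0.le]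
        rw [Real.div_rpow ht0.le hu0.le, hneg, div_eq_mul_inv]
      have hmul : u ^ (-(1:ℝ)/2) * u ^ (-(1:ℝ)/4) = u ^ (-(3:ℝ)/4) := by
        rw [← Real.rpow_add hu0]; norm_num
      simp only [hhdef]
      rw [hdiv]
      calc u ^ (-(1:ℝ)/2) * (L + 4 * (t ^ ((1:ℝ)/4) * u ^ (-(1:ℝ)/4)))
          = u ^ (-(1:ℝ)/2) * L
            + 4 * t ^ ((1:ℝ)/4) * (u ^ (-(1:ℝ)/2) * u ^ (-(1:ℝ)/4)) := by ring
        _ = _ := by rw [hmul]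
    linarith [rearr ▸ step]
  -- integrability of h on Ioo 0 t
  have ih1 : IntervalIntegrable (fun u : ℝ => u ^ (-(1:ℝ)/2)) volume 0 t :=
    intervalIntegral.intervalIntegrable_rpow' (by norm_num)
  have ih2 : IntervalIntegrable (fun u : ℝ => u ^ (-(3:ℝ)/4)) volume 0 t :=
    intervalIntegral.intervalIntegrable_rpow' (by norm_num)
  have ihh : IntervalIntegrable h volume 0 t := by
    simpa [hhdef] using (ih1.mul_const L).add (ih2.const_mul (4 * t ^ ((1:ℝ)/4)))
  have ihhIoo : IntegrableOn h (Set.Ioo 0 t) volume :=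
    ((intervalIntegrable_iff_integrableOn_Ioc_of_le ht0.le).mp ihh).mono_set
      Set.Ioo_subset_Ioc_self
  -- measurability of g on Ioo 0 t
  have hgcont : ContinuousOn g (Set.Ioo 0 t) := by
    intro u hu
    have hu0 : (0:ℝ) < u := hu.1
    apply ContinuousAt.continuousWithinAt
    apply ContinuousAt.mul
    · exact Real.continuousAt_rpow_const u _ (Or.inl hu0.ne')
    · apply Real.continuousAt_log (by positivity) |>.comp
      exact continuousAt_const.add ((continuousAt_inv₀ hu0.ne').comp
        continuousAt_id |>.congr (by filter_upwards with x; simp [one_div]))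
  -- integrability of g on Ioo 0 t
  have igIoo : IntegrableOn g (Set.Ioo 0 t) volume := by
    apply Integrable.mono ihhIoo
      (hgcont.aestronglyMeasurable measurableSet_Ioo)
    rw [ae_restrict_iff' measurableSet_Ioo]
    filter_upwards with u hu
    obtain ⟨hg0, hgh⟩ := hpt u hu
    have hh0 : 0 ≤ h u := le_trans hg0 hgh
    rw [Real.norm_eq_abs, Real.norm_eq_abs, abs_of_nonneg hg0, abs_of_nonneg hh0]
    exact hgh
  -- integrability of the original integrand
  have ig : IntervalIntegrable g volume 0 t := by
    rw [intervalIntegrable_iff_integrableOn_Ioc_of_le ht0.le,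
      integrableOn_Ioc_iff_integrableOn_Ioo]
    exact igIoo
  have icomp : IntegrableOn (fun s => g (t - s)) (Set.Ioo 0 t) volume := by
    have := (ig.comp_sub_left t).symm
    simp only [sub_zero, sub_self] at this
    rw [intervalIntegrable_iff_integrableOn_Ioc_of_le ht0.le,
      integrableOn_Ioc_iff_integrableOn_Ioo] at this
    exact this
  refine ⟨by simpa [hgdef] using icomp, ?_⟩
  -- change of variables
  have hchange : (∫ s in Set.Ioo 0 t, g (t - s)) = ∫ u in Set.Ioo 0 t, g u := by
    rw [← MeasureTheory.integral_Ioc_eq_integral_Ioo,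
      ← MeasureTheory.integral_Ioc_eq_integral_Ioo,
      ← intervalIntegral.integral_of_le ht0.le,
      ← intervalIntegral.integral_of_le ht0.le]
    have := intervalIntegral.integral_comp_sub_left (a := 0) (b := t) g t
    simp only [sub_zero, sub_self] at this
    exact this
  -- compute integrals of rpow pieces
  have int1 : (∫ u in Set.Ioo 0 t, u ^ (-(1:ℝ)/2)) = 2 * t ^ ((1:ℝ)/2) := by
    rw [← MeasureTheory.integral_Ioc_eq_integral_Ioo,
      ← intervalIntegral.integral_of_le ht0.le,
      integral_rpow (Or.inl (by norm_num))]
    have e1 : (-(1:ℝ)/2 + 1) = 1/2 := by norm_num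
    rw [e1, Real.zero_rpow (by norm_num)]
    ring
  have int2 : (∫ u in Set.Ioo 0 t, u ^ (-(3:ℝ)/4)) = 4 * t ^ ((1:ℝ)/4) := by
    rw [← MeasureTheory.integral_Ioc_eq_integral_Ioo,
      ← intervalIntegral.integral_of_le ht0.le,
      integral_rpow (Or.inl (by norm_num))]
    have e1 : (-(3:ℝ)/4 + 1) = 1/4 := by norm_num
    rw [e1, Real.zero_rpow (by norm_num)]
    ring
  have inth : (∫ u in Set.Ioo 0 t, h u)
      = 2 * t ^ ((1:ℝ)/2) * L + 16 * t ^ ((1:ℝ)/2) := by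
    have j1 : IntegrableOn (fun u : ℝ => u ^ (-(1:ℝ)/2) * L) (Set.Ioo 0 t) volume :=
      (((intervalIntegrable_iff_integrableOn_Ioc_of_le ht0.le).mp
        ih1).mono_set Set.Ioo_subset_Ioc_self).mul_const L
    have j2 : IntegrableOn (fun u : ℝ => 4 * t ^ ((1:ℝ)/4) * u ^ (-(3:ℝ)/4))
        (Set.Ioo 0 t) volume :=
      (((intervalIntegrable_iff_integrableOn_Ioc_of_le ht0.le).mp
        ih2).mono_set Set.Ioo_subset_Ioc_self).const_mul _
    have hsplit : (∫ u in Set.Ioo 0 t, h u)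
        = (∫ u in Set.Ioo 0 t, u ^ (-(1:ℝ)/2) * L)
          + ∫ u in Set.Ioo 0 t, 4 * t ^ ((1:ℝ)/4) * u ^ (-(3:ℝ)/4) :=
      MeasureTheory.integral_add j1 j2
    rw [hsplit, MeasureTheory.integral_mul_const, MeasureTheory.integral_const_mul,
      int1, int2]
    have : t ^ ((1:ℝ)/4) * t ^ ((1:ℝ)/4) = t ^ ((1:ℝ)/2) := by
      rw [← Real.rpow_add ht0]; norm_num
    nlinarith [this]
  -- compare
  have hmono : (∫ u in Set.Ioo 0 t, g u) ≤ ∫ u in Set.Ioo 0 t, h u :=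
    setIntegral_mono_on igIoo ihhIoo measurableSet_Ioo fun u hu => (hpt u hu).2
  have hbound : (∫ s in Set.Ioo 0 t, g (t - s))
      ≤ 2 * t ^ ((1:ℝ)/2) * L + 16 * t ^ ((1:ℝ)/2) := by
    rw [hchange, ← inth]; exact hmono
  have hthalf : t ^ (-(1:ℝ)/2) * t ^ ((1:ℝ)/2) = 1 := by
    rw [← Real.rpow_add ht0]; norm_num
  have htneg : (0:ℝ) ≤ t ^ (-(1:ℝ)/2) := (Real.rpow_pos_of_pos ht0 _).le
  calc t ^ (-(1:ℝ)/2) *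
        ∫ s in Set.Ioo 0 t, (t - s) ^ (-(1:ℝ)/2) * Real.log (Real.exp 1 + 1 / (t - s))
      = t ^ (-(1:ℝ)/2) * ∫ s in Set.Ioo 0 t, g (t - s) := by rw [hgdef]
    _ ≤ t ^ (-(1:ℝ)/2) * (2 * t ^ ((1:ℝ)/2) * L + 16 * t ^ ((1:ℝ)/2)) :=
        mul_le_mul_of_nonneg_left hbound htneg
    _ = 2 * L + 16 := by
        rw [mul_add]
        rw [show t ^ (-(1:ℝ)/2) * (2 * t ^ ((1:ℝ)/2) * L)
            = 2 * (t ^ (-(1:ℝ)/2) * t ^ ((1:ℝ)/2)) * L by ring,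
          show t ^ (-(1:ℝ)/2) * (16 * t ^ ((1:ℝ)/2))
            = 16 * (t ^ (-(1:ℝ)/2) * t ^ ((1:ℝ)/2)) by ring, hthalf]
        ring
    _ ≤ 18 * L := by linarith
    _ = 18 * Real.log (Real.exp 1 + 1 / t) := by rw [hLdef, he1def]
end

section
/- Let $\phi_1(t) = [\ln(e + 1/t)]^{-1}$ for $t > 0$. For every $t \in (0, 1]$, $\int_0^t (t-s)^{-1/2} \phi_1(s)^{-2}\, ds \le C\, t^{1/2} [\ln(e + 1/t)]^2$ for some absolute constant $C$. -/
open MeasureTheory Real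

theorem phi1_weighted_integral_bound :
    ∃ C : ℝ, 0 < C ∧ ∀ t : ℝ, 0 < t → t ≤ 1 →
      ∫ s in Set.Ioo 0 t, (t - s) ^ (-(1 : ℝ) / 2) * (Real.log (Real.exp 1 + 1 / s)) ^ 2
        ≤ C * t ^ ((1 : ℝ) / 2) * (Real.log (Real.exp 1 + 1 / t)) ^ 2 := by
  refine ⟨600, by norm_num, fun t ht ht1 => ?_⟩
  set L := Real.log (Real.exp 1 + 1 / t) with hLdef
  have he : (0:ℝ) < Real.exp 1 := Real.exp_pos 1
  have hL1 : 1 ≤ L := by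
    rw [hLdef]
    calc (1:ℝ) = Real.log (Real.exp 1) := (Real.log_exp 1).symm
      _ ≤ _ := Real.log_le_log he (le_add_of_nonneg_right (by positivity))
  -- the dominating function
  set g : ℝ → ℝ := fun s => 81 * L ^ 2 * t ^ ((1:ℝ)/4) *
      ((t/2) ^ (-(1:ℝ)/4) * (t - s) ^ (-(1:ℝ)/2) + (t/2) ^ (-(1:ℝ)/2) * s ^ (-(1:ℝ)/4))
    with hgdef
  -- integrability of the two pieces
  have hint1 : IntegrableOn (fun s => (t - s) ^ (-(1:ℝ)/2)) (Set.Ioo 0 t) := by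
    have h0 : IntervalIntegrable (fun x : ℝ => x ^ (-(1:ℝ)/2)) volume 0 t :=
      intervalIntegral.intervalIntegrable_rpow' (by norm_num)
    have h1 := (h0.comp_sub_left t).symm
    simp only [sub_zero, sub_self] at h1
    rw [intervalIntegrable_iff_integrableOn_Ioc_of_le ht.le] at h1
    exact h1.mono_set Set.Ioo_subset_Ioc_self
  have hint2 : IntegrableOn (fun s : ℝ => s ^ (-(1:ℝ)/4)) (Set.Ioo 0 t) := by
    have h0 : IntervalIntegrable (fun x : ℝ => x ^ (-(1:ℝ)/4)) volume 0 t :=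
      intervalIntegral.intervalIntegrable_rpow' (by norm_num)
    rw [intervalIntegrable_iff_integrableOn_Ioc_of_le ht.le] at h0
    exact h0.mono_set Set.Ioo_subset_Ioc_self
  have hintg : IntegrableOn g (Set.Ioo 0 t) := by
    rw [hgdef]
    exact (((hint1.const_mul _).add (hint2.const_mul _)).const_mul _)
  -- pointwise bound
  have hpt : ∀ s ∈ Set.Ioo (0:ℝ) t,
      (t - s) ^ (-(1 : ℝ) / 2) * (Real.log (Real.exp 1 + 1 / s)) ^ 2 ≤ g s := by
    intro s hs
    obtain ⟨hs0, hst⟩ := hs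
    have hts : (0:ℝ) < t - s := by linarith
    have hx1 : (1:ℝ) ≤ t / s := (one_le_div hs0).2 hst.le
    have hx0 : (0:ℝ) < t / s := by positivity
    -- log (e + 1/s) ≤ 9 * L * (t/s)^(1/8)
    have hlog : Real.log (Real.exp 1 + 1 / s) ≤ 9 * L * (t/s) ^ ((1:ℝ)/8) := by
      have key : Real.exp 1 + 1 / s ≤ (Real.exp 1 + 1 / t) * (t / s) := by
        have h1 : Real.exp 1 ≤ Real.exp 1 * (t/s) := le_mul_of_one_le_right he.le hx1
        have h2 : (1/t) * (t/s) = 1/s := by field_simp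
        rw [add_mul, h2]
        linarith
      have hlog1 : Real.log (Real.exp 1 + 1 / s) ≤ L + Real.log (t/s) := by
        calc Real.log (Real.exp 1 + 1 / s) ≤ Real.log ((Real.exp 1 + 1 / t) * (t / s)) :=
              Real.log_le_log (by positivity) key
          _ = L + Real.log (t/s) := by
              rw [Real.log_mul (by positivity) (by positivity)]
      have h8 : Real.log (t/s) ≤ 8 * ((t/s) ^ ((1:ℝ)/8) - 1) := by
        have := Real.log_le_sub_one_of_pos (Real.rpow_pos_of_pos hx0 ((1:ℝ)/8))
        rw [Real.log_rpow hx0] at this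
        linarith
      have hge1 : (1:ℝ) ≤ (t/s) ^ ((1:ℝ)/8) := Real.one_le_rpow hx1 (by norm_num)
      have hlogx : 0 ≤ Real.log (t/s) := Real.log_nonneg hx1
      nlinarith [mul_le_mul_of_nonneg_left h8 (by linarith : (0:ℝ) ≤ L),
        mul_le_mul_of_nonneg_right hL1 (by linarith : (0:ℝ) ≤ (t/s) ^ ((1:ℝ)/8) - 1)]
    have hsq : (Real.log (Real.exp 1 + 1 / s)) ^ 2 ≤ 81 * L ^ 2 * (t/s) ^ ((1:ℝ)/4) := by
      have hnn : 0 ≤ Real.log (Real.exp 1 + 1 / s) := Real.log_nonneg (by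
        have : (1:ℝ) ≤ Real.exp 1 := by
          simpa using Real.exp_le_exp.2 (by norm_num : (0:ℝ) ≤ 1)
        have : (0:ℝ) < 1/s := by positivity
        linarith)
      have := pow_le_pow_left₀ hnn hlog 2
      have hsqx : ((t/s) ^ ((1:ℝ)/8)) ^ 2 = (t/s) ^ ((1:ℝ)/4) := by
        rw [← Real.rpow_natCast ((t/s) ^ ((1:ℝ)/8)) 2, ← Real.rpow_mul hx0.le]
        norm_num
      calc (Real.log (Real.exp 1 + 1 / s)) ^ 2 ≤ (9 * L * (t/s) ^ ((1:ℝ)/8)) ^ 2 := this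
        _ = 81 * L ^ 2 * (t/s) ^ ((1:ℝ)/4) := by rw [mul_pow, mul_pow, hsqx]; ring
    -- (t/s)^(1/4) = t^(1/4) * s^(-1/4)
    have hsplit : (t/s) ^ ((1:ℝ)/4) = t ^ ((1:ℝ)/4) * s ^ (-(1:ℝ)/4) := by
      rw [Real.div_rpow ht.le hs0.le, neg_div, Real.rpow_neg hs0.le, div_eq_mul_inv]
    -- case bound
    have hcase : (t - s) ^ (-(1:ℝ)/2) * s ^ (-(1:ℝ)/4) ≤
        (t/2) ^ (-(1:ℝ)/4) * (t - s) ^ (-(1:ℝ)/2) + (t/2) ^ (-(1:ℝ)/2) * s ^ (-(1:ℝ)/4) := by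
      have ht2 : (0:ℝ) < t/2 := by positivity
      rcases le_or_gt s (t/2) with hc | hc
      · have h1 : (t - s) ^ (-(1:ℝ)/2) ≤ (t/2) ^ (-(1:ℝ)/2) :=
          Real.rpow_le_rpow_of_nonpos ht2 (by linarith) (by norm_num)
        have h2 : (0:ℝ) ≤ (t/2) ^ (-(1:ℝ)/4) * (t - s) ^ (-(1:ℝ)/2) := by positivity
        nlinarith [Real.rpow_pos_of_pos hs0 (-(1:ℝ)/4)]
      · have h1 : s ^ (-(1:ℝ)/4) ≤ (t/2) ^ (-(1:ℝ)/4) :=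
          Real.rpow_le_rpow_of_nonpos ht2 hc.le (by norm_num)
        have h2 : (0:ℝ) ≤ (t/2) ^ (-(1:ℝ)/2) * s ^ (-(1:ℝ)/4) := by positivity
        nlinarith [Real.rpow_pos_of_pos hts (-(1:ℝ)/2)]
    have hpos : (0:ℝ) < (t - s) ^ (-(1:ℝ)/2) := Real.rpow_pos_of_pos hts _
    calc (t - s) ^ (-(1 : ℝ) / 2) * (Real.log (Real.exp 1 + 1 / s)) ^ 2
        ≤ (t - s) ^ (-(1:ℝ)/2) * (81 * L ^ 2 * (t/s) ^ ((1:ℝ)/4)) :=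
          mul_le_mul_of_nonneg_left hsq hpos.le
      _ = 81 * L ^ 2 * t ^ ((1:ℝ)/4) * ((t - s) ^ (-(1:ℝ)/2) * s ^ (-(1:ℝ)/4)) := by
          rw [hsplit]; ring
      _ ≤ g s := by
          rw [hgdef]
          have h815 : (0:ℝ) ≤ 81 * L ^ 2 * t ^ ((1:ℝ)/4) := by positivity
          exact mul_le_mul_of_nonneg_left hcase h815
  -- monotonicity of the integral
  have hmono : ∫ s in Set.Ioo 0 t, (t - s) ^ (-(1 : ℝ) / 2) * (Real.log (Real.exp 1 + 1 / s)) ^ 2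
      ≤ ∫ s in Set.Ioo 0 t, g s := by
    refine integral_mono_of_nonneg ?_ hintg ?_
    · filter_upwards [ae_restrict_mem measurableSet_Ioo] with s hs
      have hts : (0:ℝ) < t - s := by linarith [hs.2]
      positivity
    · filter_upwards [ae_restrict_mem measurableSet_Ioo] with s hs
      exact hpt s hs
  -- value of the integrals
  have hI1 : ∫ s in Set.Ioo 0 t, (t - s) ^ (-(1:ℝ)/2) = 2 * t ^ ((1:ℝ)/2) := by
    rw [← integral_Ioc_eq_integral_Ioo, ← intervalIntegral.integral_of_le ht.le]
    rw [intervalIntegral.integral_comp_sub_left (fun x : ℝ => x ^ (-(1:ℝ)/2)) t]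
    simp only [sub_zero, sub_self]
    rw [integral_rpow (Or.inl (by norm_num))]
    rw [Real.zero_rpow (by norm_num)]
    norm_num
    ring
  have hI2 : ∫ s in Set.Ioo 0 t, s ^ (-(1:ℝ)/4) = (4/3) * t ^ ((3:ℝ)/4) := by
    rw [← integral_Ioc_eq_integral_Ioo, ← intervalIntegral.integral_of_le ht.le]
    rw [integral_rpow (Or.inl (by norm_num))]
    rw [Real.zero_rpow (by norm_num)]
    norm_num
    ring
  have hgval : ∫ s in Set.Ioo 0 t, g s = 81 * L ^ 2 * t ^ ((1:ℝ)/4) *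
      ((t/2) ^ (-(1:ℝ)/4) * (2 * t ^ ((1:ℝ)/2)) + (t/2) ^ (-(1:ℝ)/2) * ((4/3) * t ^ ((3:ℝ)/4))) := by
    rw [hgdef]
    rw [integral_const_mul]
    rw [integral_add (hint1.const_mul _) (hint2.const_mul _), integral_const_mul,
      integral_const_mul, hI1, hI2]
  -- final arithmetic
  have hfinal : 81 * L ^ 2 * t ^ ((1:ℝ)/4) *
      ((t/2) ^ (-(1:ℝ)/4) * (2 * t ^ ((1:ℝ)/2)) + (t/2) ^ (-(1:ℝ)/2) * ((4/3) * t ^ ((3:ℝ)/4)))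
      ≤ 600 * t ^ ((1:ℝ)/2) * L ^ 2 := by
    have ht2 : (0:ℝ) < t/2 := by positivity
    have e1 : (t/2) ^ (-(1:ℝ)/4) = 2 ^ ((1:ℝ)/4) * t ^ (-(1:ℝ)/4) := by
      rw [Real.div_rpow ht.le (by norm_num : (0:ℝ) ≤ 2), neg_div,
        Real.rpow_neg (show (0:ℝ) ≤ 2 by norm_num) ((1:ℝ)/4), div_eq_mul_inv, inv_inv, mul_comm]
    have e2 : (t/2) ^ (-(1:ℝ)/2) = 2 ^ ((1:ℝ)/2) * t ^ (-(1:ℝ)/2) := by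
      rw [Real.div_rpow ht.le (by norm_num : (0:ℝ) ≤ 2), neg_div,
        Real.rpow_neg (show (0:ℝ) ≤ 2 by norm_num) ((1:ℝ)/2), div_eq_mul_inv, inv_inv, mul_comm]
    have m1 : t ^ ((1:ℝ)/4) * (t ^ (-(1:ℝ)/4) * t ^ ((1:ℝ)/2)) = t ^ ((1:ℝ)/2) := by
      rw [← Real.rpow_add ht, ← Real.rpow_add ht]; norm_num
    have m2 : t ^ ((1:ℝ)/4) * (t ^ (-(1:ℝ)/2) * t ^ ((3:ℝ)/4)) = t ^ ((1:ℝ)/2) := by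
      rw [← Real.rpow_add ht, ← Real.rpow_add ht]; norm_num
    have c1 : (2:ℝ) ^ ((1:ℝ)/4) ≤ 2 := by
      have := Real.rpow_le_rpow_of_exponent_le (by norm_num : (1:ℝ) ≤ 2)
        (by norm_num : (1:ℝ)/4 ≤ 1)
      rwa [Real.rpow_one] at this
    have c2 : (2:ℝ) ^ ((1:ℝ)/2) ≤ 2 := by
      have := Real.rpow_le_rpow_of_exponent_le (by norm_num : (1:ℝ) ≤ 2)
        (by norm_num : (1:ℝ)/2 ≤ 1)
      rwa [Real.rpow_one] at this
    have cp1 : (0:ℝ) < 2 ^ ((1:ℝ)/4) := by positivity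
    have cp2 : (0:ℝ) < 2 ^ ((1:ℝ)/2) := by positivity
    have hts : (0:ℝ) < t ^ ((1:ℝ)/2) := Real.rpow_pos_of_pos ht _
    have hL0 : (0:ℝ) < L ^ 2 := by positivity
    calc 81 * L ^ 2 * t ^ ((1:ℝ)/4) *
        ((t/2) ^ (-(1:ℝ)/4) * (2 * t ^ ((1:ℝ)/2)) + (t/2) ^ (-(1:ℝ)/2) * ((4/3) * t ^ ((3:ℝ)/4)))
        = 81 * L ^ 2 * (2 ^ ((1:ℝ)/4) * 2 * (t ^ ((1:ℝ)/4) * (t ^ (-(1:ℝ)/4) * t ^ ((1:ℝ)/2)))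
          + 2 ^ ((1:ℝ)/2) * (4/3) * (t ^ ((1:ℝ)/4) * (t ^ (-(1:ℝ)/2) * t ^ ((3:ℝ)/4)))) := by
          rw [e1, e2]; ring
      _ = 81 * L ^ 2 * (2 ^ ((1:ℝ)/4) * 2 + 2 ^ ((1:ℝ)/2) * (4/3)) * t ^ ((1:ℝ)/2) := by
          rw [m1, m2]; ring
      _ = 81 * L ^ 2 * t ^ ((1:ℝ)/2) * (2 ^ ((1:ℝ)/4) * 2 + 2 ^ ((1:ℝ)/2) * (4/3)) := by
          ring
      _ ≤ 81 * L ^ 2 * t ^ ((1:ℝ)/2) * (2 * 2 + 2 * (4/3)) := by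
          refine mul_le_mul_of_nonneg_left (by linarith) (by positivity)
      _ = 540 * (t ^ ((1:ℝ)/2) * L ^ 2) := by ring
      _ ≤ 600 * (t ^ ((1:ℝ)/2) * L ^ 2) := by
          have hp : (0:ℝ) ≤ t ^ ((1:ℝ)/2) * L ^ 2 := by positivity
          linarith
      _ = 600 * t ^ ((1:ℝ)/2) * L ^ 2 := by ring
  calc ∫ s in Set.Ioo 0 t, (t - s) ^ (-(1 : ℝ) / 2) * (Real.log (Real.exp 1 + 1 / s)) ^ 2
      ≤ ∫ s in Set.Ioo 0 t, g s := hmono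
    _ ≤ 600 * t ^ ((1:ℝ)/2) * L ^ 2 := by rw [hgval]; exact hfinal
end
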